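/- arXiv:2404.09536 — 3 statements merged into one kernel-verified Lean document; each statement's English description precedes it below -/
import Mathlib

section
/- The probability that a real node N_i receives the entire model of another real node N_j in a given round, namely P = (1 - (1 - r/(nk-1))^k)^k, is a decreasing function of the number of virtual nodes k: for every k ≥ 1, (1 - (1 - r/(n(k+1)-1))^(k+1))^(k+1) ≤ (1 - (1 - r/(nk-1))^k)^k. -/
/-!
Write `q k = 1 - r / (n k - 1)` for the probability that two given virtual nodes are not
adjacent. Weighted AM-GM applied to `k` copies of `q k` and one copy of `1` gives
`q k ^ k ≤ ((k q k + 1) / (k + 1)) ^ (k + 1)`, and `(k + 1) r / (n (k + 1) - 1) ≤ k r / (n k - 1)`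
says exactly that this mean is at most `q (k + 1)`. Hence `q k ^ k ≤ q (k + 1) ^ (k + 1)`, so the
base `1 - q ^ k` of the probability shrinks when `k` grows, while staying in `[0, 1]`, where
raising to the larger exponent `k + 1` can only decrease it further.
-/

theorem pow_le_weighted_mean_pow {a : ℝ} (ha : 0 ≤ a) (k : ℕ) :
    a ^ k ≤ ((k * a + 1) / (k + 1)) ^ (k + 1) := by
  have hk : (0 : ℝ) < k + 1 := by positivity
  have amgm := Real.geom_mean_le_arith_mean2_weighted (w₁ := k / (k + 1)) (w₂ := 1 / (k + 1))
    (by positivity) (by positivity) ha zero_le_one (by field_simp)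
  rw [Real.one_rpow, mul_one] at amgm
  calc a ^ k = (a ^ ((k : ℝ) / (k + 1))) ^ (k + 1) := by
        rw [← Real.rpow_mul_natCast ha, ← Real.rpow_natCast a k]
        congr 1
        push_cast
        field_simp
    _ ≤ ((k * a + 1) / (k + 1)) ^ (k + 1) := by
        gcongr
        exact amgm.trans_eq (by field_simp)

theorem succ_mul_div_le_mul_div {n r k : ℝ} (hr : 0 ≤ r) (hk : 0 ≤ k) (hnk : 1 < n * k) :
    (k + 1) * (r / (n * (k + 1) - 1)) ≤ k * (r / (n * k - 1)) := by
  have hn : 0 < n := pos_of_mul_pos_left (by linarith) hk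
  rw [← mul_div_assoc, ← mul_div_assoc, div_le_div_iff₀ (by nlinarith) (by linarith)]
  nlinarith

theorem one_sub_div_pow_le_pow_succ {n r : ℝ} {k : ℕ} (hr : 0 ≤ r) (hrk : r < n * k - 1) :
    (1 - r / (n * k - 1)) ^ k ≤ (1 - r / (n * (k + 1) - 1)) ^ (k + 1) := by
  have hd : 0 < n * k - 1 := by linarith
  have hq : 0 ≤ 1 - r / (n * k - 1) := sub_nonneg.2 ((div_le_one hd).2 hrk.le)
  have hlin := succ_mul_div_le_mul_div (n := n) hr k.cast_nonneg (by linarith)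
  calc (1 - r / (n * k - 1)) ^ k ≤ ((k * (1 - r / (n * k - 1)) + 1) / (k + 1)) ^ (k + 1) :=
        pow_le_weighted_mean_pow hq k
    _ ≤ (1 - r / (n * (k + 1) - 1)) ^ (k + 1) := by
        gcongr
        rw [div_le_iff₀ (by positivity)]
        linarith

theorem one_sub_pow_succ_le {x y : ℝ} (hx : 0 ≤ x) (hxy : x ≤ y) (hy : y ≤ 1) (k : ℕ) :
    (1 - y) ^ (k + 1) ≤ (1 - x) ^ k :=
  calc (1 - y) ^ (k + 1) ≤ (1 - x) ^ (k + 1) := pow_le_pow_left₀ (by linarith) (by linarith) _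
    _ ≤ (1 - x) ^ k := pow_le_pow_of_le_one (by linarith) (by linarith) k.le_succ

theorem stmt_2_general (n r : ℝ) (hr : 1 ≤ r) :
    ∀ k : ℕ, 1 ≤ k → r ≤ n * k - 2 →
      (1 - (1 - r / (n * (k + 1 : ℕ) - 1)) ^ ((k : ℕ) + 1)) ^ ((k : ℕ) + 1) ≤
        (1 - (1 - r / (n * k - 1)) ^ k) ^ k := by
  intro k hk hrk
  push_cast
  have hr0 : 0 ≤ r := by linarith
  have hk0 : (1 : ℝ) ≤ k := by exact_mod_cast hk
  have hn : 0 < n := by nlinarith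
  have hq : 0 ≤ 1 - r / (n * k - 1) := sub_nonneg.2 (div_le_one_of_le₀ (by linarith) (by linarith))
  have hq' : 0 ≤ 1 - r / (n * (k + 1) - 1) :=
    sub_nonneg.2 (div_le_one_of_le₀ (by nlinarith) (by nlinarith))
  have hq'_le : 1 - r / (n * (k + 1) - 1) ≤ 1 := sub_le_self _ (div_nonneg hr0 (by nlinarith))
  exact one_sub_pow_succ_le (pow_nonneg hq k) (one_sub_div_pow_le_pow_succ hr0 (by linarith))
    (pow_le_one₀ hq' hq'_le) k

/-- The probability `P = (1 - (1 - r/(n*k-1))^k)^k` that a real node receives the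
entire model of another real node is decreasing in the number `k` of virtual nodes:
for every `k ≥ 1`,
`(1 - (1 - r/(n*(k+1)-1))^(k+1))^(k+1) ≤ (1 - (1 - r/(n*k-1))^k)^k`.
Here `n > 1` (number of real nodes) and `1 ≤ r ≤ n*k - 2` (degree). -/
theorem stmt_2 (n r : ℝ) (hn : 1 < n) (hr : 1 ≤ r) :
    ∀ k : ℕ, 1 ≤ k → r ≤ n * k - 2 →
      (1 - (1 - r / (n * (k + 1 : ℕ) - 1)) ^ ((k : ℕ) + 1)) ^ ((k : ℕ) + 1) ≤
        (1 - (1 - r / (n * k - 1)) ^ k) ^ k :=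
  stmt_2_general n r hr
end

section
/- In a uniformly random r-regular graph on m vertices, for four distinct vertices v, w, v', w', the conditional probability P[{v,w} ∈ E | {v',w'} ∈ E] = (r - 2·(r-1)/(m-2)) / (m-3). -/
/-!
Condition on the edge `v'w'`. Double counting the pairs `(G, x)` with `G.Adj u x` shows that the
conditional expected degree of any vertex `u` is still `r`. Relabellings fixing `{v', w'}` make
`P[ux ∈ E | v'w' ∈ E]` independent of `x` outside `{u, v', w'}`, and the swap of `v'` and `w'`
identifies `P[vw' ∈ E | v'w' ∈ E]` with `P[vv' ∈ E | v'w' ∈ E]`. Taking `u = v'` gives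
`P[v'v ∈ E | v'w' ∈ E] = (r - 1) / (m - 2)`, and taking `u = v` then gives the formula.
The conditioning event is nonempty: a circulant graph on `ZMod m` with jumps `±1, …, ±k` is
`2k`-regular, its complement handles odd `r`, and a relabelling moves one of its edges to `v'w'`.
-/

open Finset SimpleGraph

namespace ZMod

lemma injOn_intCast_Icc {n k : ℕ} (hk : 2 * k < n) :
    Set.InjOn (Int.cast : ℤ → ZMod n) (Set.Icc (-k) k) := by
  intro a ha b hb hab
  rw [ZMod.intCast_eq_intCast_iff_dvd_sub] at hab
  have := Int.eq_zero_of_abs_lt_dvd hab <| by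
    rw [abs_lt]; constructor <;> linarith [ha.1, ha.2, hb.1, hb.2]
  omega

lemma exists_neg_eq_ncard_eq_two_mul {n k : ℕ} (hk : 2 * k < n) :
    ∃ s : Set (ZMod n), -s = s ∧ (0 : ZMod n) ∉ s ∧ s.ncard = 2 * k := by
  have hinj := injOn_intCast_Icc hk
  set J : Finset ℤ := (Icc (-k : ℤ) k).erase 0 with hJ
  have hJ_Icc : (J : Set ℤ) ⊆ Set.Icc (-k) k := fun j hj => by simpa using (mem_erase.1 hj).2
  have hneg : ∀ x ∈ (Int.cast : ℤ → ZMod n) '' J, -x ∈ (Int.cast : ℤ → ZMod n) '' J := by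
    rintro _ ⟨j, hj, rfl⟩
    refine ⟨-j, ?_, by push_cast; rfl⟩
    simp only [hJ, coe_erase, coe_Icc, Set.mem_sdiff, Set.mem_Icc, Set.mem_singleton_iff] at hj ⊢
    omega
  refine ⟨(Int.cast : ℤ → ZMod n) '' J, ?_, ?_, ?_⟩
  · ext x
    exact ⟨fun h => by simpa using hneg _ h, hneg x⟩
  · rintro ⟨j, hj, hj0⟩
    refine (mem_erase.1 hj).1 (hinj (hJ_Icc hj) ⟨by omega, by omega⟩ ?_)
    simpa using hj0
  · rw [(hinj.mono hJ_Icc).ncard_image, Set.ncard_coe_finset, card_erase_of_mem (by simp),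
      Int.card_Icc]
    omega

end ZMod

namespace SimpleGraph

variable {V W : Type*}

lemma ncard_neighborSet_comap_equiv (e : V ≃ W) (G : SimpleGraph W) (v : V) :
    ((G.comap e).neighborSet v).ncard = (G.neighborSet (e v)).ncard := by
  rw [Set.ncard_def, Set.ncard_def, ← Set.encard_preimage_of_bijective e.bijective]
  rfl

lemma forall_ncard_neighborSet_comap_equiv_iff (e : V ≃ W) (G : SimpleGraph W) (r : ℕ) :
    (∀ v, ((G.comap e).neighborSet v).ncard = r) ↔ ∀ w, (G.neighborSet w).ncard = r := by
  simp only [ncard_neighborSet_comap_equiv]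
  exact ⟨fun h w => by simpa using h (e.symm w), fun h v => h (e v)⟩

lemma ncard_neighborSet_eq_degree (G : SimpleGraph V) (v : V) [Fintype (G.neighborSet v)] :
    (G.neighborSet v).ncard = G.degree v := by
  rw [Set.ncard_eq_toFinset_card', ← card_neighborFinset_eq_degree, neighborFinset_def]

lemma ncard_neighborSet_compl [Fintype V] (G : SimpleGraph V) (v : V) :
    (Gᶜ.neighborSet v).ncard = Fintype.card V - 1 - (G.neighborSet v).ncard := by
  classical
  rw [ncard_neighborSet_eq_degree, ncard_neighborSet_eq_degree, degree_compl]

lemma ncard_neighborSet_circulantGraph {G : Type*} [AddGroup G] {s : Set G} (hs : -s = s)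
    (h0 : (0 : G) ∉ s) (x : G) : ((circulantGraph s).neighborSet x).ncard = s.ncard := by
  have hnbr : (circulantGraph s).neighborSet x = (Equiv.subRight x) ⁻¹' s := by
    ext y
    have hsymm : x - y ∈ s ↔ y - x ∈ s := by rw [← neg_sub, ← Set.mem_neg, hs]
    simp only [mem_neighborSet, circulantGraph_adj, hsymm, or_self, Equiv.subRight_apply,
      Set.mem_preimage, and_iff_right_iff_imp]
    rintro hy rfl
    exact h0 (by simpa using hy)
  rw [hnbr, Set.ncard_def, Set.ncard_def, Set.encard_preimage_of_bijective (Equiv.bijective _)]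

lemma exists_regular_of_even [Fintype V] {r : ℕ} (hr : r < Fintype.card V) (heven : Even r) :
    ∃ G : SimpleGraph V, ∀ v, (G.neighborSet v).ncard = r := by
  set n := Fintype.card V
  obtain ⟨k, rfl⟩ := heven
  have : NeZero n := ⟨by omega⟩
  obtain ⟨s, hs, h0, hcard⟩ := ZMod.exists_neg_eq_ncard_eq_two_mul (n := n) (k := k) (by omega)
  let e : V ≃ ZMod n := Fintype.equivOfCardEq (ZMod.card n).symm
  exact ⟨(circulantGraph s).comap e, fun v => by
    rw [ncard_neighborSet_comap_equiv, ncard_neighborSet_circulantGraph hs h0, hcard, two_mul]⟩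

lemma exists_regular [Fintype V] {r : ℕ} (hr : r < Fintype.card V)
    (heven : Even (r * Fintype.card V)) :
    ∃ G : SimpleGraph V, ∀ v, (G.neighborSet v).ncard = r := by
  rcases Nat.even_or_odd r with hr_even | hr_odd
  · exact exists_regular_of_even hr hr_even
  · have hV : Even (Fintype.card V) :=
      (Nat.even_mul.1 heven).resolve_left (Nat.not_even_iff_odd.2 hr_odd)
    obtain ⟨H, hH⟩ := exists_regular_of_even (V := V) (r := Fintype.card V - 1 - r) (by omega)
      (by obtain ⟨a, ha⟩ := hV; obtain ⟨b, hb⟩ := hr_odd; exact ⟨a - b - 1, by omega⟩)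
    exact ⟨Hᶜ, fun v => by rw [ncard_neighborSet_compl, hH]; omega⟩

lemma exists_regular_adj [Fintype V] {r : ℕ} (hr0 : 0 < r) (hr : r < Fintype.card V)
    (heven : Even (r * Fintype.card V)) {a b : V} (hab : a ≠ b) :
    ∃ G : SimpleGraph V, (∀ v, (G.neighborSet v).ncard = r) ∧ G.Adj a b := by
  classical
  obtain ⟨G, hG⟩ := exists_regular hr heven
  obtain ⟨c, hac⟩ : (G.neighborSet a).Nonempty :=
    Set.nonempty_of_ncard_ne_zero (by rw [hG a]; omega)
  refine ⟨G.comap (Equiv.swap b c), (forall_ncard_neighborSet_comap_equiv_iff _ G r).2 hG, ?_⟩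
  rwa [comap_adj, Equiv.swap_apply_of_ne_of_ne hab (G.ne_of_adj hac), Equiv.swap_apply_left]

/-- Conditional probabilities for the uniformly random `r`-regular graph on `V` are ratios of
these counts. -/
noncomputable def regularCount (r : ℕ) (P : SimpleGraph V → Prop) : ℕ :=
  Nat.card {G : SimpleGraph V // (∀ v, (G.neighborSet v).ncard = r) ∧ P G}

lemma regularCount_comap_perm (r : ℕ) (σ : Equiv.Perm V) (P : SimpleGraph V → Prop) :
    regularCount r (fun G => P (G.comap σ)) = regularCount r P :=
  Nat.card_congr <| σ.symm.simpleGraph.subtypeEquiv fun G => by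
    simp [forall_ncard_neighborSet_comap_equiv_iff]

lemma regularCount_adj_adj_swap [DecidableEq V] (r : ℕ) {a b c x y : V}
    (hxa : x ≠ a) (hxb : x ≠ b) (hxc : x ≠ c) (hya : y ≠ a) (hyb : y ≠ b) (hyc : y ≠ c) :
    regularCount r (fun G => G.Adj a b ∧ G.Adj c x) =
      regularCount r (fun G => G.Adj a b ∧ G.Adj c y) := by
  rw [← regularCount_comap_perm r (Equiv.swap x y) (fun G => G.Adj a b ∧ G.Adj c y)]
  simp only [comap_adj, Equiv.swap_apply_right, Equiv.swap_apply_of_ne_of_ne hxa.symm hya.symm,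
    Equiv.swap_apply_of_ne_of_ne hxb.symm hyb.symm, Equiv.swap_apply_of_ne_of_ne hxc.symm hyc.symm]

lemma sum_regularCount_adj [Fintype V] (r : ℕ) (P : SimpleGraph V → Prop) (u : V) :
    ∑ x, regularCount r (fun G => P G ∧ G.Adj u x) = r * regularCount r P := by
  classical
  set S := ({G | (∀ v, (G.neighborSet v).ncard = r) ∧ P G} : Finset (SimpleGraph V))
  have hcount (Q : SimpleGraph V → Prop) :
      regularCount r Q = #{G | (∀ v, (G.neighborSet v).ncard = r) ∧ Q G} := by
    rw [regularCount, Nat.card_eq_fintype_card, Fintype.card_subtype]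
  calc ∑ x, regularCount r (fun G => P G ∧ G.Adj u x)
      = ∑ x, #(S.bipartiteBelow (fun G x => G.Adj u x) x) := by
        simp only [hcount, bipartiteBelow, S, filter_filter, and_assoc]
        convert rfl
    _ = ∑ G ∈ S, #(univ.bipartiteAbove (fun G x => G.Adj u x) G) :=
        (sum_card_bipartiteAbove_eq_sum_card_bipartiteBelow _).symm
    _ = ∑ G ∈ S, r := sum_congr rfl fun G hG => by
        rw [← (mem_filter.1 hG).2.1 u, ncard_neighborSet_eq_degree,
          ← card_neighborFinset_eq_degree]
        congr 1
        ext x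
        simp
    _ = r * regularCount r P := by rw [sum_const, smul_eq_mul, hcount, mul_comm]

lemma mul_regularCount_adj_eq_of_endpoint [Fintype V] [DecidableEq V] (r : ℕ) {a b c : V}
    (hab : a ≠ b) (hca : c ≠ a) (hcb : c ≠ b) :
    r * regularCount r (·.Adj a b) = regularCount r (·.Adj a b) +
      (Fintype.card V - 2) * regularCount r (fun G => G.Adj a b ∧ G.Adj a c) := by
  have hloop : regularCount r (fun G => G.Adj a b ∧ G.Adj a a) = 0 := by simp [regularCount]
  have hrest : ∀ x ∈ ({a, b} : Finset V)ᶜ, regularCount r (fun G => G.Adj a b ∧ G.Adj a x) =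
      regularCount r (fun G => G.Adj a b ∧ G.Adj a c) := by
    intro x hx
    simp only [mem_compl, mem_insert, mem_singleton, not_or] at hx
    exact regularCount_adj_adj_swap r hx.1 hx.2 hx.1 hca hcb hca
  rw [← sum_regularCount_adj r _ a, ← sum_add_sum_compl {a, b}, sum_pair hab, sum_congr rfl hrest,
    sum_const, card_compl, card_pair hab, hloop, smul_eq_mul]
  simp only [and_self, zero_add]

lemma mul_regularCount_adj_eq_of_off_edge [Fintype V] [DecidableEq V] (r : ℕ) {a b c d : V}
    (hab : a ≠ b) (hca : c ≠ a) (hcb : c ≠ b) (hda : d ≠ a) (hdb : d ≠ b) (hdc : d ≠ c) :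
    r * regularCount r (·.Adj a b) = 2 * regularCount r (fun G => G.Adj a b ∧ G.Adj a c) +
      (Fintype.card V - 3) * regularCount r (fun G => G.Adj a b ∧ G.Adj c d) := by
  have hloop : regularCount r (fun G => G.Adj a b ∧ G.Adj c c) = 0 := by simp [regularCount]
  have hca' : regularCount r (fun G => G.Adj a b ∧ G.Adj c a) =
      regularCount r (fun G => G.Adj a b ∧ G.Adj a c) := by
    simp only [adj_comm _ c a]
  have hcb' : regularCount r (fun G => G.Adj a b ∧ G.Adj c b) =
      regularCount r (fun G => G.Adj a b ∧ G.Adj c a) := by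
    rw [← regularCount_comap_perm r (Equiv.swap a b)]
    simp only [comap_adj, Equiv.swap_apply_left, Equiv.swap_apply_right,
      Equiv.swap_apply_of_ne_of_ne hca hcb, adj_comm _ b a]
  have hrest : ∀ x ∈ ({c, a, b} : Finset V)ᶜ, regularCount r (fun G => G.Adj a b ∧ G.Adj c x) =
      regularCount r (fun G => G.Adj a b ∧ G.Adj c d) := by
    intro x hx
    simp only [mem_compl, mem_insert, mem_singleton, not_or] at hx
    exact regularCount_adj_adj_swap r hx.2.1 hx.2.2 hx.1 hda hdb hdc
  have hc : c ∉ ({a, b} : Finset V) := by simp [hca, hcb]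
  rw [← sum_regularCount_adj r _ c, ← sum_add_sum_compl {c, a, b}, sum_insert hc, sum_pair hab,
    sum_congr rfl hrest, sum_const, card_compl, card_insert_of_notMem hc, card_pair hab, hloop,
    hcb', hca', smul_eq_mul]
  ring

end SimpleGraph

/-- In a uniformly random `r`-regular graph on `m` labeled vertices
(`m ≥ 4`, `1 ≤ r ≤ m-1`, `r*m` even), for four distinct vertices `v, w, v', w'`, the
conditional probability
`P[{v,w} ∈ E | {v',w'} ∈ E] = (r - 2·(r-1)/(m-2)) / (m-3)`,
expressed as a ratio of counts of `r`-regular graphs. -/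
theorem stmt_7 (m r : ℕ) (hm : 4 ≤ m) (hr1 : 1 ≤ r) (hr2 : r ≤ m - 1)
    (heven : Even (r * m)) (v w v' w' : Fin m)
    (h1 : v ≠ w) (h2 : v ≠ v') (h3 : v ≠ w') (h4 : w ≠ v') (h5 : w ≠ w') (h6 : v' ≠ w') :
    (Nat.card {G : SimpleGraph (Fin m) //
        (∀ x, (G.neighborSet x).ncard = r) ∧ G.Adj v' w' ∧ G.Adj v w} : ℝ) /
      (Nat.card {G : SimpleGraph (Fin m) //
        (∀ x, (G.neighborSet x).ncard = r) ∧ G.Adj v' w'} : ℝ) =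
      ((r : ℝ) - 2 * ((r : ℝ) - 1) / ((m : ℝ) - 2)) / ((m : ℝ) - 3) := by
  change (regularCount r (fun G => G.Adj v' w' ∧ G.Adj v w) : ℝ) / regularCount r (·.Adj v' w') = _
  have hN : 0 < regularCount r (·.Adj v' w') := by
    obtain ⟨G, hG⟩ := exists_regular_adj (V := Fin m) hr1 (by simp; omega) (by simpa) h6
    exact Nat.card_pos_iff.2 ⟨⟨⟨G, hG⟩⟩, inferInstance⟩
  have hend := mul_regularCount_adj_eq_of_endpoint r h6 h2 h3
  have hoff := mul_regularCount_adj_eq_of_off_edge r h6 h2 h3 h4 h5 h1.symm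
  rw [Fintype.card_fin] at hend hoff
  have hm' : (4 : ℝ) ≤ m := by exact_mod_cast hm
  have hm2 : (m : ℝ) - 2 ≠ 0 := by linarith
  have hm3 : (m : ℝ) - 3 ≠ 0 := by linarith
  have hN' : (regularCount r (·.Adj v' w') : ℝ) ≠ 0 := by exact_mod_cast hN.ne'
  replace hend := congrArg (Nat.cast : ℕ → ℝ) hend
  replace hoff := congrArg (Nat.cast : ℕ → ℝ) hoff
  push_cast [Nat.cast_sub (show 2 ≤ m by omega), Nat.cast_sub (show 3 ≤ m by omega)] at hend hoff
  field_simp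
  linear_combination (2 - (m : ℝ)) * hoff + 2 * hend
end

section
/- Let M be a symmetric positive-definite p×p matrix whose eigenvalues all lie in [α, β] with 0 < α < β. Then det(M) ≥ α^κ · β^{p-κ}, where κ = (β·p − tr(M))/(β − α). -/
/-! Writing each eigenvalue `λ ∈ [α, β]` as the convex combination
`λ = w α + v β` with `w = (β - λ)/(β - α)`, `v = (λ - α)/(β - α)`, weighted AM–GM gives
`α ^ w * β ^ v ≤ λ`. Multiplying over the eigenvalues, the exponents of `α` add up to
`κ = (β p - tr M)/(β - α)` and those of `β` to `p - κ`. -/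

open Finset

namespace Real

theorem rpow_mul_rpow_le_of_mem_Icc {a b x : ℝ} (ha : 0 < a) (hab : a < b)
    (hx : x ∈ Set.Icc a b) :
    a ^ ((b - x) / (b - a)) * b ^ ((x - a) / (b - a)) ≤ x := by
  have hba : 0 < b - a := sub_pos.mpr hab
  calc a ^ ((b - x) / (b - a)) * b ^ ((x - a) / (b - a))
      ≤ (b - x) / (b - a) * a + (x - a) / (b - a) * b :=
        geom_mean_le_arith_mean2_weighted (div_nonneg (sub_nonneg.mpr hx.2) hba.le)
          (div_nonneg (sub_nonneg.mpr hx.1) hba.le) ha.le (ha.trans hab).le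
          (by field_simp; ring)
    _ = x := by field_simp; ring

theorem rpow_mul_rpow_le_prod_of_mem_Icc {ι : Type*} (s : Finset ι) {a b : ℝ} (ha : 0 < a)
    (hab : a < b) (x : ι → ℝ) (hx : ∀ i ∈ s, x i ∈ Set.Icc a b) :
    a ^ ((b * #s - ∑ i ∈ s, x i) / (b - a)) *
        b ^ ((#s : ℝ) - (b * #s - ∑ i ∈ s, x i) / (b - a)) ≤ ∏ i ∈ s, x i := by
  have hba : b - a ≠ 0 := (sub_pos.mpr hab).ne'
  set κ := (b * #s - ∑ i ∈ s, x i) / (b - a)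
  have hκ : ∑ i ∈ s, (b - x i) / (b - a) = κ := by
    rw [← sum_div, sum_sub_distrib, sum_const, nsmul_eq_mul, mul_comm]
  have hκ' : ∑ i ∈ s, (x i - a) / (b - a) = #s - κ := by
    rw [← hκ, ← nsmul_one, ← sum_const, ← sum_sub_distrib]
    refine sum_congr rfl fun i _ => ?_
    field_simp
    ring
  calc a ^ κ * b ^ ((#s : ℝ) - κ)
      = ∏ i ∈ s, a ^ ((b - x i) / (b - a)) * b ^ ((x i - a) / (b - a)) := by
        rw [prod_mul_distrib, ← rpow_sum_of_pos ha, ← rpow_sum_of_pos (ha.trans hab), hκ, hκ']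
    _ ≤ ∏ i ∈ s, x i :=
        prod_le_prod
          (fun _ _ => mul_nonneg (rpow_nonneg ha.le _) (rpow_nonneg (ha.trans hab).le _))
          fun i hi => rpow_mul_rpow_le_of_mem_Icc ha hab (hx i hi)

end Real

theorem stmt_12_general (p : ℕ) (α β : ℝ) (hα : 0 < α) (hαβ : α < β)
    (M : Matrix (Fin p) (Fin p) ℝ) (hM : M.IsHermitian)
    (heig : ∀ i, α ≤ hM.eigenvalues i ∧ hM.eigenvalues i ≤ β) :
    α ^ ((β * p - M.trace) / (β - α)) *
        β ^ ((p : ℝ) - (β * p - M.trace) / (β - α)) ≤ M.det := by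
  have h := Real.rpow_mul_rpow_le_prod_of_mem_Icc univ hα hαβ hM.eigenvalues
    fun i _ => heig i
  rw [card_univ, Fintype.card_fin] at h
  simpa [hM.trace_eq_sum_eigenvalues, hM.det_eq_prod_eigenvalues] using h

/-- Kalantari–Pate determinantal lower bound: Let `M` be a symmetric
positive-definite `p × p` real matrix whose eigenvalues all lie in `[α, β]` with
`0 < α < β`. Then `det M ≥ α^κ · β^(p-κ)` where `κ = (β·p − tr M)/(β − α)`. -/
theorem stmt_12 (p : ℕ) (α β : ℝ) (hα : 0 < α) (hαβ : α < β)
    (M : Matrix (Fin p) (Fin p) ℝ) (hM : M.IsHermitian) (hpd : M.PosDef)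
    (heig : ∀ i, α ≤ hM.eigenvalues i ∧ hM.eigenvalues i ≤ β) :
    α ^ ((β * p - M.trace) / (β - α)) *
        β ^ ((p : ℝ) - (β * p - M.trace) / (β - α)) ≤ M.det :=
  stmt_12_general p α β hα hαβ M hM heig
end
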